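/- arXiv:1905.03112 — 9 statements merged into one kernel-verified Lean document; each statement's English description precedes it below -/
import Mathlib

section
/- The set of natural numbers y for which there exists a natural number s with 1 ≤ s ≤ y and ξ(y - s) = ξ(y + s) is infinite. (In other words, there are infinitely many points of oscillation of ξ.) -/
/-- The prime index function ι(n) = (-1)^π(n), where π is the prime counting
function (number of primes ≤ n). -/
def iota (n : ℕ) : ℤ := (-1) ^ (Nat.primeCounting n)

/-- The second prime index function ξ(x) = ∑_{n=1}^{x} ι(n). -/
def xi (x : ℕ) : ℤ := ∑ n ∈ Finset.Icc 1 x, iota n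

lemma xi_succ (x : ℕ) : xi (x + 1) = xi x + iota (x + 1) := by
  unfold xi
  rw [← Finset.sum_Icc_succ_top (by omega : 1 ≤ x + 1)]

lemma pc_prime {p : ℕ} (hp : p.Prime) : p.primeCounting = (p - 1).primeCounting + 1 := by
  have h1 : 1 ≤ p := hp.one_lt.le
  unfold Nat.primeCounting Nat.primeCounting'
  have : p - 1 + 1 = p := by omega
  rw [this, Nat.count_succ, if_pos hp]

theorem infinitely_many_oscillation_points :
    {y : ℕ | ∃ s : ℕ, 1 ≤ s ∧ s ≤ y ∧ xi (y - s) = xi (y + s)}.Infinite := by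
  apply Set.infinite_of_not_bddAbove
  rintro ⟨N, hN⟩
  obtain ⟨p, hpN, hp⟩ := Nat.exists_infinite_primes (N + 3)
  have hy : p - 1 ∈ {y : ℕ | ∃ s : ℕ, 1 ≤ s ∧ s ≤ y ∧ xi (y - s) = xi (y + s)} := by
    refine ⟨1, le_refl 1, by omega, ?_⟩
    have h2 : p - 1 - 1 + 1 = p - 1 := by omega
    have h3 : p - 1 + 1 = p := by omega
    obtain ⟨a, ha⟩ : ∃ a, p = a + 2 := ⟨p - 2, by omega⟩
    subst ha
    simp only [Nat.add_sub_cancel, show a + 2 - 1 = a + 1 from rfl, Nat.add_sub_cancel]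
    rw [show a + 1 + 1 = a + 2 from rfl, xi_succ, xi_succ]
    have : iota (a + 2) = - iota (a + 1) := by
      unfold iota
      rw [pc_prime hp, pow_succ]
      simp [show a + 2 - 1 = a + 1 from rfl]
    rw [this]
    ring
  have := hN hy
  omega
end

section
/- Let x and t be natural numbers with 1 ≤ t ≤ x such that ξ(x - t) = ξ(x + t). If there is no prime p with x - t < p < x + t, then x + t is prime. -/
/-!
If `x + t` were not prime, `π` would be constant on `[x - t, x + t]`, so `ι` would be a constant
`±1` there and `ξ(x + t) - ξ(x - t)` would be `±` the (positive) length of the interval,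
contradicting the oscillation `ξ(x - t) = ξ(x + t)`.
-/

open Finset

theorem primesLE_eq_of_forall_not_prime {a b : ℕ} (hab : a ≤ b)
    (h : ∀ p ∈ Ioc a b, ¬ p.Prime) : Nat.primesLE b = Nat.primesLE a := by
  ext p
  simp only [Nat.mem_primesLE]
  constructor
  · rintro ⟨hpb, hp⟩
    exact ⟨not_lt.1 fun hap => h p (mem_Ioc.2 ⟨hap, hpb⟩) hp, hp⟩
  · rintro ⟨hpa, hp⟩
    exact ⟨hpa.trans hab, hp⟩

theorem primeCounting_eq_of_forall_not_prime {a b : ℕ} (hab : a ≤ b)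
    (h : ∀ p ∈ Ioc a b, ¬ p.Prime) : Nat.primeCounting b = Nat.primeCounting a := by
  rw [← Nat.primesLE_card_eq_primeCounting, ← Nat.primesLE_card_eq_primeCounting,
    primesLE_eq_of_forall_not_prime hab h]

theorem iota_ne_zero (n : ℕ) : iota n ≠ 0 :=
  pow_ne_zero _ (by norm_num)

theorem xi_eq_sum_Ioc (x : ℕ) : xi x = ∑ n ∈ Ioc 0 x, iota n := by
  rw [xi, ← Icc_add_one_left_eq_Ioc, zero_add]

theorem xi_sub_xi {a b : ℕ} (hab : a ≤ b) : xi b - xi a = ∑ n ∈ Ioc a b, iota n := by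
  rw [xi_eq_sum_Ioc, xi_eq_sum_Ioc, ← sum_Ioc_consecutive _ a.zero_le hab, add_sub_cancel_left]

theorem xi_sub_xi_of_forall_not_prime {a b : ℕ} (hab : a ≤ b)
    (h : ∀ p ∈ Ioc a b, ¬ p.Prime) : xi b - xi a = (b - a : ℕ) * iota a := by
  have hconst : ∀ n ∈ Ioc a b, iota n = iota a := fun n hn => by
    have hn' := mem_Ioc.1 hn
    rw [iota, iota, primeCounting_eq_of_forall_not_prime hn'.1.le
      fun p hp => h p (Ioc_subset_Ioc_right hn'.2 hp)]
  rw [xi_sub_xi hab, sum_congr rfl hconst, sum_const, Nat.card_Ioc, nsmul_eq_mul]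

theorem prime_of_oscillation_no_prime_inside_general (x t : ℕ) (ht1 : 1 ≤ t)
    (hosc : xi (x - t) = xi (x + t))
    (hnp : ∀ p : ℕ, Nat.Prime p → ¬(x - t < p ∧ p < x + t)) :
    Nat.Prime (x + t) := by
  by_contra hcomp
  have hgap : ∀ p ∈ Ioc (x - t) (x + t), ¬ p.Prime := by
    intro p hp hprime
    obtain ⟨hlo, hhi⟩ := mem_Ioc.1 hp
    rcases hhi.lt_or_eq with hlt | rfl
    · exact hnp p hprime ⟨hlo, hlt⟩
    · exact hcomp hprime
  have hincr := xi_sub_xi_of_forall_not_prime (by omega) hgap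
  rw [← hosc, sub_self] at hincr
  have hlen : ((x + t - (x - t) : ℕ) : ℤ) ≠ 0 := by omega
  exact mul_ne_zero hlen (iota_ne_zero _) hincr.symm

theorem prime_of_oscillation_no_prime_inside (x t : ℕ) (ht1 : 1 ≤ t) (ht2 : t ≤ x)
    (hosc : xi (x - t) = xi (x + t))
    (hnp : ∀ p : ℕ, Nat.Prime p → ¬(x - t < p ∧ p < x + t)) :
    Nat.Prime (x + t) :=
  prime_of_oscillation_no_prime_inside_general x t ht1 hosc hnp
end

section
/- Let a ≤ b be natural numbers and let x_1 < x_2 < ⋯ < x_n be natural numbers in the interval [a, b] such that ξ(x_1) = ξ(x_2) = ⋯ = ξ(x_n). Then the interval [a, b] contains at least n - 1 primes; that is, the number of primes p with a ≤ p ≤ b is at least n - 1. -/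
/-!
If `(a, b]` contains no prime, then `π`, hence `ι = ±1`, is constant on `(a, b]`, so
`ξ b - ξ a = ±(b - a) ≠ 0` for `a < b`. Thus every pair of consecutive coincidences
`x_i < x_{i+1}` of `ξ` encloses a prime in `(x_i, x_{i+1}]`, and these `n - 1` half-open
intervals are disjoint subintervals of `[a, b]`.
-/

open Finset

theorem Nat.exists_prime_mem_Ioc_of_primeCounting_lt {a b : ℕ}
    (h : a.primeCounting < b.primeCounting) : ∃ p ∈ Ioc a b, p.Prime := by
  obtain ⟨p, hp, hprime⟩ := Nat.exists_of_count_lt_count h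
  simp only [Set.mem_Ico] at hp
  exact ⟨p, mem_Ioc.2 ⟨by omega, by omega⟩, hprime⟩

theorem xi_eq_add_sum_Ioc {a b : ℕ} (hab : a ≤ b) :
    xi b = xi a + ∑ n ∈ Ioc a b, iota n := by
  have hIcc : ∀ c : ℕ, Icc 1 c = Ioc 0 c := Icc_add_one_left_eq_Ioc 0
  rw [xi, xi, hIcc, hIcc, sum_Ioc_consecutive _ a.zero_le hab]

theorem xi_ne_of_primeCounting_eq {a b : ℕ} (hab : a < b)
    (h : a.primeCounting = b.primeCounting) : xi a ≠ xi b := by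
  have hconst : ∀ n ∈ Ioc a b, iota n = iota a := fun n hn => by
    obtain ⟨han, hnb⟩ := mem_Ioc.1 hn
    have := Nat.monotone_primeCounting han.le
    have := Nat.monotone_primeCounting hnb
    rw [iota, iota]; congr 1; omega
  rw [xi_eq_add_sum_Ioc hab.le, sum_congr rfl hconst, sum_const, Nat.card_Ioc]
  have : iota a ≠ 0 := pow_ne_zero _ (by norm_num)
  simpa [this] using Nat.sub_ne_zero_of_lt hab

theorem exists_prime_mem_Ioc_of_xi_eq {a b : ℕ} (hab : a < b) (h : xi a = xi b) :
    ∃ p ∈ Ioc a b, p.Prime := by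
  refine Nat.exists_prime_mem_Ioc_of_primeCounting_lt <|
    (Nat.monotone_primeCounting hab.le).lt_of_ne fun hπ => ?_
  exact xi_ne_of_primeCounting_eq hab hπ h

theorem Finset.le_card_of_forall_exists_mem_between {α : Type*} [Preorder α] {m : ℕ}
    {x : Fin (m + 1) → α} (hx : Monotone x) (s : Finset α)
    (h : ∀ i : Fin m, ∃ p ∈ s, x i.castSucc < p ∧ p ≤ x i.succ) : m ≤ #s := by
  choose g hgs hlt hle using h
  have hg : StrictMono g := fun i j hij =>
    calc g i ≤ x i.succ := hle i
      _ ≤ x j.castSucc := hx (Fin.succ_le_castSucc_iff.2 hij)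
      _ < g j := hlt j
  simpa using card_le_card_of_injOn (s := univ) g (fun i _ => hgs i) hg.injective.injOn

theorem primes_in_interval_of_xi_coincidences_general (a b n : ℕ)
    (x : Fin n → ℕ) (hmono : StrictMono x)
    (hmem : ∀ i, x i ∈ Finset.Icc a b)
    (hxi : ∀ i j, xi (x i) = xi (x j)) :
    n - 1 ≤ ((Finset.Icc a b).filter Nat.Prime).card := by
  obtain _ | m := n
  · simp
  refine le_card_of_forall_exists_mem_between hmono.monotone _ fun i => ?_
  obtain ⟨p, hp, hprime⟩ := exists_prime_mem_Ioc_of_xi_eq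
    (hmono (Fin.castSucc_lt_succ (i := i))) (hxi _ _)
  obtain ⟨hlt, hle⟩ := mem_Ioc.1 hp
  have hpab : p ∈ Icc a b :=
    mem_Icc.2 ⟨(mem_Icc.1 (hmem _)).1.trans hlt.le, hle.trans (mem_Icc.1 (hmem _)).2⟩
  exact ⟨p, mem_filter.2 ⟨hpab, hprime⟩, hlt, hle⟩

theorem primes_in_interval_of_xi_coincidences (a b n : ℕ) (hab : a ≤ b)
    (x : Fin n → ℕ) (hmono : StrictMono x)
    (hmem : ∀ i, x i ∈ Finset.Icc a b)
    (hxi : ∀ i j, xi (x i) = xi (x j)) :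
    n - 1 ≤ ((Finset.Icc a b).filter Nat.Prime).card :=
  primes_in_interval_of_xi_coincidences_general a b n x hmono hmem hxi
end

section
/- Let p_1 < p_2 < ⋯ < p_n be consecutive primes (i.e., each p_i is prime and for each i there is no prime strictly between p_i and p_{i+1}). If ξ(p_1) = ξ(p_2) = ⋯ = ξ(p_n), then p_1 < p_2 < ⋯ < p_n is an arithmetic progression with common difference 2, i.e., p_{i+1} - p_i = 2 for all 1 ≤ i ≤ n - 1. -/
lemma pc_eq_of_no_prime_between {p q m : ℕ} (hpq : p < q)
    (hcons : ∀ r, Nat.Prime r → ¬(p < r ∧ r < q)) (h1 : p ≤ m) (h2 : m < q) :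
    Nat.primeCounting m = Nat.primeCounting p := by
  unfold Nat.primeCounting Nat.primeCounting'
  rw [Nat.count_eq_card_filter_range, Nat.count_eq_card_filter_range]
  congr 1
  ext r
  simp only [Finset.mem_filter, Finset.mem_range]
  constructor
  · rintro ⟨hr, hrp⟩
    refine ⟨?_, hrp⟩
    by_contra h
    exact hcons r hrp ⟨by omega, by omega⟩
  · rintro ⟨hr, hrp⟩
    exact ⟨by omega, hrp⟩

lemma key {p q : ℕ} (hp : p.Prime) (hq : q.Prime) (hpq : p < q)
    (hcons : ∀ r, Nat.Prime r → ¬(p < r ∧ r < q)) (hxi : xi p = xi q) :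
    q - p = 2 := by
  have hq_count : Nat.primeCounting q = Nat.primeCounting p + 1 := by
    unfold Nat.primeCounting Nat.primeCounting'
    rw [Nat.count_eq_card_filter_range, Nat.count_eq_card_filter_range]
    have hset : Finset.filter Nat.Prime (Finset.range (q + 1)) =
        insert q (Finset.filter Nat.Prime (Finset.range (p + 1))) := by
      ext r
      simp only [Finset.mem_filter, Finset.mem_range, Finset.mem_insert]
      constructor
      · rintro ⟨hr, hrp⟩
        rcases eq_or_lt_of_le (Nat.lt_succ_iff.mp hr) with h | h
        · exact Or.inl h
        · refine Or.inr ⟨?_, hrp⟩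
          by_contra hh
          exact hcons r hrp ⟨by omega, h⟩
      · rintro (rfl | ⟨hr, hrp⟩)
        · exact ⟨by omega, hq⟩
        · exact ⟨by omega, hrp⟩
    rw [hset, Finset.card_insert_of_notMem (by simp [Finset.mem_filter]; omega)]
  have hiq : iota q = -iota p := by
    simp [iota, hq_count, pow_succ]
  have hmid : ∀ m ∈ Finset.Ioc p (q - 1), iota m = iota p := by
    intro m hm
    simp only [Finset.mem_Ioc] at hm
    simp [iota, pc_eq_of_no_prime_between hpq hcons (le_of_lt hm.1) (by omega)]
  have hsplit : Finset.Ioc p q = insert q (Finset.Ioc p (q - 1)) := by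
    ext m
    simp only [Finset.mem_Ioc, Finset.mem_insert]
    omega
  have hS : ∑ m ∈ Finset.Ioc p q, iota m = ((q : ℤ) - p - 2) * iota p := by
    rw [hsplit, Finset.sum_insert (by simp [Finset.mem_Ioc]; omega)]
    rw [Finset.sum_congr rfl hmid, Finset.sum_const, Nat.card_Ioc, hiq]
    have : ((q - 1 - p : ℕ) : ℤ) = (q : ℤ) - p - 1 := by
      have := hq.two_le; push_cast [Nat.sub_sub]; omega
    rw [nsmul_eq_mul, this]
    ring
  have hxiq : xi q = xi p + ∑ m ∈ Finset.Ioc p q, iota m := by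
    have hIcc : ∀ x : ℕ, Finset.Icc 1 x = Finset.Ioc 0 x := by
      intro x; ext m; simp only [Finset.mem_Icc, Finset.mem_Ioc]; omega
    unfold xi
    rw [hIcc, hIcc, ← Finset.sum_Ioc_consecutive iota (Nat.zero_le p) hpq.le]
  have hiotane : iota p ≠ 0 := by
    simp [iota]
  have : ((q : ℤ) - p - 2) * iota p = 0 := by omega
  have h0 : (q : ℤ) - p - 2 = 0 := by
    rcases mul_eq_zero.mp this with h | h
    · exact h
    · exact absurd h hiotane
  omega

theorem consecutive_primes_xi_eq_arithmetic_progression (n : ℕ) (p : ℕ → ℕ)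
    (hprime : ∀ i < n, Nat.Prime (p i))
    (hmono : ∀ i, i + 1 < n → p i < p (i + 1))
    (hconsec : ∀ i, i + 1 < n → ∀ r : ℕ, Nat.Prime r → ¬(p i < r ∧ r < p (i + 1)))
    (hxi : ∀ i < n, ∀ j < n, xi (p i) = xi (p j)) :
    ∀ i, i + 1 < n → p (i + 1) - p i = 2 := by
  intro i hi
  exact key (hprime i (by omega)) (hprime (i + 1) hi) (hmono i hi)
    (fun r hr => hconsec i hi r hr)
    (hxi i (by omega) (i + 1) hi)
end

section
/- Let p < q be consecutive primes with p > 2. Then |ξ(q) - ξ(p)| + 2 = q - p. -/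
theorem abs_xi_diff_add_two_eq_gap (p q : ℕ) (hp : Nat.Prime p) (hq : Nat.Prime q)
    (hpq : p < q) (hp2 : 2 < p)
    (hconsec : ∀ r : ℕ, Nat.Prime r → ¬(p < r ∧ r < q)) :
    |xi q - xi p| + 2 = (q : ℤ) - (p : ℤ) := by
  have hpi : ∀ n, p ≤ n → n < q → Nat.primeCounting n = Nat.primeCounting p := by
    intro n hn hnq
    induction n with
    | zero => omega
    | succ m ih =>
      rcases Nat.eq_or_lt_of_le hn with h | h
      · rw [← h]
      · have hm : p ≤ m := by omega
        have hnp : ¬ Nat.Prime (m+1) := fun hpr => hconsec _ hpr ⟨by omega, hnq⟩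
        have : Nat.primeCounting (m+1) = Nat.primeCounting m := by
          simp [Nat.primeCounting, Nat.primeCounting', Nat.count_succ, hnp]
        rw [this, ih hm (by omega)]
  have hq1 : Nat.primeCounting q = Nat.primeCounting p + 1 := by
    obtain ⟨m, rfl⟩ : ∃ m, q = m + 1 := ⟨q - 1, by omega⟩
    have : Nat.primeCounting (m+1) = Nat.primeCounting m + 1 := by
      simp [Nat.primeCounting, Nat.primeCounting', Nat.count_succ, hq]
    rw [this, hpi m (by omega) (by omega)]
  -- decompose the sum
  set e : ℤ := (-1) ^ (Nat.primeCounting p) with he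
  have hdiff : xi q - xi p = ((q : ℤ) - p - 2) * e := by
    have hsplit : Finset.Icc 1 p ∪ Finset.Ioc p q = Finset.Icc 1 q := by
      ext n; simp only [Finset.mem_union, Finset.mem_Icc, Finset.mem_Ioc]; omega
    have hdisj : Disjoint (Finset.Icc 1 p) (Finset.Ioc p q) := by
      simp [Finset.disjoint_left, Finset.mem_Icc, Finset.mem_Ioc]
      omega
    have h1 : xi q = xi p + ∑ n ∈ Finset.Ioc p q, iota n := by
      rw [xi, xi, ← hsplit, Finset.sum_union hdisj]
    have hins : Finset.Ioc p q = insert q (Finset.Ioo p q) := (Finset.Ioo_insert_right hpq).symm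
    have h2 : ∑ n ∈ Finset.Ioc p q, iota n = iota q + ∑ n ∈ Finset.Ioo p q, iota n := by
      rw [hins, Finset.sum_insert (by simp)]
    have h3 : ∑ n ∈ Finset.Ioo p q, iota n = ((q : ℤ) - p - 1) * e := by
      have hc : ∀ n ∈ Finset.Ioo p q, iota n = e := by
        intro n hn
        simp only [Finset.mem_Ioo] at hn
        rw [iota, hpi n hn.1.le hn.2]
      have hcast : ((q - p - 1 : ℕ) : ℤ) = (q : ℤ) - p - 1 := by omega
      rw [Finset.sum_congr rfl hc, Finset.sum_const, Nat.card_Ioo, nsmul_eq_mul, hcast]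
    have h4 : iota q = -e := by
      rw [iota, hq1, pow_succ, he]; ring
    rw [h1, h2, h3, h4]; ring
  have hodd_p : Odd p := hp.odd_of_ne_two (by omega)
  have hodd_q : Odd q := hq.odd_of_ne_two (by omega)
  have hge : (q : ℤ) - p - 2 ≥ 0 := by
    obtain ⟨a, ha⟩ := hodd_p
    obtain ⟨b, hb⟩ := hodd_q
    have : (q : ℤ) = 2*b+1 := by exact_mod_cast congrArg Nat.cast hb
    have : (p : ℤ) = 2*a+1 := by exact_mod_cast congrArg Nat.cast ha
    omega
  have habs_e : |e| = 1 := by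
    rw [he, abs_pow, abs_neg, abs_one, one_pow]
  rw [hdiff, abs_mul, habs_e, mul_one, abs_of_nonneg hge]
  ring
end

section
/- Let x and t be natural numbers with 1 ≤ t ≤ x such that ξ(x - t) = ξ(x + t). If x - t is prime and there is no prime p with x - t < p < x + t, then 2x can be written as a sum of two primes; in fact x + t is prime and 2x = (x - t) + (x + t). -/
lemma pc_succ (n : ℕ) : Nat.primeCounting (n+1) =
    Nat.primeCounting n + if (n+1).Prime then 1 else 0 := by
  simp [Nat.primeCounting, Nat.primeCounting', Nat.count_succ]

theorem goldbach_of_oscillation (x t : ℕ) (ht1 : 1 ≤ t) (ht2 : t ≤ x)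
    (hosc : xi (x - t) = xi (x + t))
    (hprime : Nat.Prime (x - t))
    (hnp : ∀ p : ℕ, Nat.Prime p → ¬(x - t < p ∧ p < x + t)) :
    Nat.Prime (x + t) ∧ 2 * x = (x - t) + (x + t) := by
  set a := x - t with ha
  set b := x + t with hb
  have hab : a + 2 * t = b := by omega
  -- π constant on [a, b)
  have hc : ∀ k, k < 2 * t → Nat.primeCounting (a + k) = Nat.primeCounting a := by
    intro k hk
    induction k with
    | zero => rfl
    | succ m ih =>
      have hnp' : ¬ (a + m + 1).Prime := fun h => hnp _ h ⟨by omega, by omega⟩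
      rw [show a + (m+1) = (a + m) + 1 from rfl, pc_succ, if_neg hnp', ih (by omega)]
      omega
  -- sum over Ioc a b is 0
  have hxi : ∀ y : ℕ, xi y = ∑ n ∈ Finset.Ioc 0 y, iota n := by
    intro y; rw [xi]; congr 1
  have hsum : ∑ n ∈ Finset.Ioc a b, iota n = 0 := by
    have h1 : (∑ n ∈ Finset.Ioc 0 a, iota n) + ∑ n ∈ Finset.Ioc a b, iota n
        = ∑ n ∈ Finset.Ioc 0 b, iota n :=
      Finset.sum_Ioc_consecutive _ (by omega) (by omega)
    rw [hxi, hxi] at hosc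
    omega
  -- split off last term
  have hb1 : a ≤ b - 1 := by omega
  have hsplit : (∑ n ∈ Finset.Ioc a (b-1), iota n) + ∑ n ∈ Finset.Ioc (b-1) b, iota n
      = ∑ n ∈ Finset.Ioc a b, iota n :=
    Finset.sum_Ioc_consecutive _ hb1 (by omega)
  have hlast : ∑ n ∈ Finset.Ioc (b-1) b, iota n = iota b := by
    rw [show Finset.Ioc (b-1) b = {b} by ext n; simp [Finset.mem_Ioc]; omega]
    simp
  have hconst : ∑ n ∈ Finset.Ioc a (b-1), iota n = (2*t - 1 : ℕ) * iota a := by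
    rw [Finset.sum_congr rfl (fun n hn => ?_), Finset.sum_const, Nat.card_Ioc, nsmul_eq_mul]
    · congr 2
      omega
    · simp only [Finset.mem_Ioc] at hn
      have h1 : n = a + (n - a) := by omega
      have h2 : Nat.primeCounting n = Nat.primeCounting a := by
        rw [h1]; exact hc (n - a) (by omega)
      simp [iota, h2]
  have hia : iota a = 1 ∨ iota a = -1 := by
    unfold iota; rcases Nat.even_or_odd (Nat.primeCounting a) with h | h
    · left; exact h.neg_one_pow
    · right; exact h.neg_one_pow
  have hib : iota b = 1 ∨ iota b = -1 := by
    unfold iota; rcases Nat.even_or_odd (Nat.primeCounting b) with h | h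
    · left; exact h.neg_one_pow
    · right; exact h.neg_one_pow
  have heq : (2*t - 1 : ℕ) * iota a + iota b = 0 := by
    rw [← hconst, ← hlast, hsplit, hsum]
  have ht : t = 1 := by
    rcases hia with h | h <;> rcases hib with h' | h' <;>
      rw [h, h'] at heq <;> omega
  have hbo : iota b = - iota a := by
    subst ht
    norm_num at heq
    linarith
  have hpb1 : Nat.primeCounting (b - 1) = Nat.primeCounting a := by
    have := hc 1 (by omega)
    rw [show b - 1 = a + 1 by omega]
    exact this
  have hbp : (b).Prime := by
    by_contra hnpb
    have : Nat.primeCounting b = Nat.primeCounting a := by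
      rw [show b = (b-1) + 1 by omega, pc_succ, if_neg (by rwa [show b - 1 + 1 = b by omega]), hpb1]
      omega
    simp only [iota, this] at hbo
    rcases hia with h | h <;> unfold iota at h <;> rw [h] at hbo <;> norm_num at hbo
  exact ⟨hbp, by omega⟩
end

section
/- Let x be a natural number with x ≥ 1 such that ξ(x - 1) = ξ(x + 1). Then x + 1 is prime. -/
lemma primeCounting_succ (n : ℕ) :
    Nat.primeCounting (n + 1) =
      Nat.primeCounting n + (if Nat.Prime (n + 1) then 1 else 0) := by
  simp [Nat.primeCounting, Nat.primeCounting', Nat.count_succ]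

theorem prime_succ_of_oscillation_period_one (x : ℕ) (hx : 1 ≤ x)
    (hosc : xi (x - 1) = xi (x + 1)) :
    Nat.Prime (x + 1) := by
  have h1 : xi (x + 1) = xi x + iota (x + 1) := by
    rw [xi, Finset.sum_Icc_succ_top (by omega : 1 ≤ x + 1)]; rfl
  have h2 : xi x = xi (x - 1) + iota x := by
    have hx' : x - 1 + 1 = x := by omega
    rw [xi, ← hx', Finset.sum_Icc_succ_top (by omega : 1 ≤ x - 1 + 1), hx']; rfl
  have hsum : iota x + iota (x + 1) = 0 := by
    rw [h1, h2] at hosc; linarith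
  by_contra hnp
  rw [iota, iota, primeCounting_succ, if_neg hnp] at hsum
  simp at hsum
end

section
/- For every natural number N there exist consecutive primes p < q such that |ξ(q - 1) - ξ(p + 1)| > N. (That is, the deviation in oscillations of ξ between consecutive primes can be made arbitrarily large.) -/
theorem deviation_arbitrarily_large (N : ℕ) :
    ∃ p q : ℕ, Nat.Prime p ∧ Nat.Prime q ∧ p < q ∧
      (∀ r : ℕ, Nat.Prime r → ¬(p < r ∧ r < q)) ∧
      (N : ℤ) < |xi (q - 1) - xi (p + 1)| := by
  set M := Nat.factorial (N + 3) with hM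
  have hM3 : N + 3 ≤ M := Nat.self_le_factorial _
  -- the set of primes ≤ M + 1
  set P : Finset ℕ := (Finset.Icc 2 (M + 1)).filter Nat.Prime with hP
  have h2P : 2 ∈ P := by
    simp [hP, Nat.prime_two]
    omega
  have hPne : P.Nonempty := ⟨2, h2P⟩
  set p := P.max' hPne with hp
  have hpP : p ∈ P := P.max'_mem hPne
  have hpprime : Nat.Prime p := (Finset.mem_filter.mp hpP).2
  have hpM : p ≤ M + 1 := (Finset.mem_Icc.mp (Finset.mem_filter.mp hpP).1).2
  have hpmax : ∀ r : ℕ, Nat.Prime r → r ≤ M + 1 → r ≤ p := by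
    intro r hr hrM
    have := hr.two_le
    exact P.le_max' r (by simp [hP, hr]; omega)
  have hex : ∃ q, p < q ∧ Nat.Prime q := by
    obtain ⟨q, hq1, hq2⟩ := Nat.exists_infinite_primes (p + 1)
    exact ⟨q, by omega, hq2⟩
  set q := Nat.find hex with hq
  obtain ⟨hpq, hqprime⟩ := Nat.find_spec hex
  have hcons : ∀ r : ℕ, Nat.Prime r → ¬(p < r ∧ r < q) := by
    intro r hr ⟨h1, h2⟩
    exact Nat.find_min hex h2 ⟨h1, hr⟩
  -- q is large: q ≥ M + N + 4
  have hqbig : M + N + 4 ≤ q := by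
    by_contra hle
    push_neg at hle
    have hq2 : M + 2 ≤ q := by
      by_contra h
      push_neg at h
      have := hpmax q hqprime (by omega)
      omega
    set j := q - M with hj
    have hj2 : 2 ≤ j := by omega
    have hjN : j ≤ N + 3 := by omega
    have hdvdM : j ∣ M := Nat.dvd_factorial (by omega) hjN
    have hdvdq : j ∣ q := by
      have : q = M + j := by omega
      rw [this]
      exact dvd_add hdvdM dvd_rfl
    rcases (Nat.Prime.eq_one_or_self_of_dvd hqprime j hdvdq) with h | h <;> omega
  have hp2 : 2 ≤ p := hpprime.two_le
  -- prime counting constant on [p, q)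
  have key : ∀ n : ℕ, p ≤ n → n < q → n.primeCounting = p.primeCounting := by
    intro n hn
    induction n with
    | zero => omega
    | succ m ih =>
      intro hmq
      rcases Nat.eq_or_lt_of_le hn with h | h
      · rw [← h]
      · have hpm : p ≤ m := by omega
        have hmnp : ¬ Nat.Prime (m + 1) := by
          intro hpr
          exact hcons (m + 1) hpr ⟨by omega, hmq⟩
        have hih := ih hpm (by omega)
        have h1 : (m + 1).primeCounting = m.primeCounting + if Nat.Prime (m + 1) then 1 else 0 := by
          simp [Nat.primeCounting, Nat.primeCounting', Nat.count_succ]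
        rw [h1, if_neg hmnp, add_zero, hih]
  have hgap : p + 3 ≤ q := by omega
  -- compute the difference
  have hxi : xi (q - 1) - xi (p + 1) = ((q - 1 - (p + 1) : ℕ) : ℤ) * (-1) ^ p.primeCounting := by
    have hsplit : ∑ n ∈ Finset.Ioc 0 (p + 1), iota n + ∑ n ∈ Finset.Ioc (p + 1) (q - 1), iota n
        = ∑ n ∈ Finset.Ioc 0 (q - 1), iota n :=
      Finset.sum_Ioc_consecutive _ (by omega) (by omega)
    have hconst : ∑ n ∈ Finset.Ioc (p + 1) (q - 1), iota n
        = ((q - 1 - (p + 1) : ℕ) : ℤ) * (-1) ^ p.primeCounting := by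
      have hc : ∀ n ∈ Finset.Ioc (p + 1) (q - 1), iota n = (-1) ^ p.primeCounting := by
        intro n hn
        simp only [Finset.mem_Ioc] at hn
        unfold iota
        rw [key n (by omega) (by omega)]
      rw [Finset.sum_congr rfl hc, Finset.sum_const, Nat.card_Ioc, nsmul_eq_mul]
    unfold xi
    rw [show Finset.Icc 1 (q - 1) = Finset.Ioc 0 (q - 1) by rfl,
        show Finset.Icc 1 (p + 1) = Finset.Ioc 0 (p + 1) by rfl]
    omega
  refine ⟨p, q, hpprime, hqprime, hpq, hcons, ?_⟩
  rw [hxi, abs_mul, abs_pow]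
  simp only [abs_neg, abs_one, one_pow, mul_one]
  rw [Nat.abs_cast]
  have : N + 1 ≤ q - 1 - (p + 1) := by omega
  exact_mod_cast this
end

section
/- Let a ≤ b be natural numbers and suppose the interval [a, b] contains consecutive primes p_1 < p_2 < ⋯ < p_n (each p_i prime, no prime strictly between p_i and p_{i+1}) with ξ(p_1) = ξ(p_2) = ⋯ = ξ(p_n). Then [a, b] contains primes in arithmetic progression: the p_i satisfy p_{i+1} - p_i = 2 for all 1 ≤ i ≤ n - 1. -/
lemma count_const_aux (P m : ℕ) (h : P ≤ m)
    (hnp : ∀ k, P < k → k ≤ m → ¬ Nat.Prime k) :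
    Nat.count Nat.Prime (m + 1) = Nat.count Nat.Prime (P + 1) := by
  induction m with
  | zero =>
    have : P = 0 := by omega
    rw [this]
  | succ m ih =>
    rcases eq_or_lt_of_le h with rfl | h'
    · rfl
    · have h2 : P ≤ m := by omega
      rw [Nat.count_succ]
      have hnpm : ¬ Nat.Prime (m + 1) := hnp _ (by omega) le_rfl
      simp only [hnpm, if_false, add_zero]
      exact ih h2 (fun k hk1 hk2 => hnp k hk1 (by omega))

theorem interval_contains_primes_in_ap (a b n : ℕ) (hab : a ≤ b) (p : ℕ → ℕ)
    (hmem : ∀ i < n, p i ∈ Finset.Icc a b)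
    (hprime : ∀ i < n, Nat.Prime (p i))
    (hmono : ∀ i, i + 1 < n → p i < p (i + 1))
    (hconsec : ∀ i, i + 1 < n → ∀ r : ℕ, Nat.Prime r → ¬(p i < r ∧ r < p (i + 1)))
    (hxi : ∀ i < n, ∀ j < n, xi (p i) = xi (p j)) :
    ∀ i, i + 1 < n → p (i + 1) - p i = 2 := by
  intro i hi
  set P := p i with hPdef
  set Q := p (i + 1) with hQdef
  have hQ : Q.Prime := hprime (i + 1) hi
  have hPQ : P < Q := hmono i hi
  have hxiPQ : xi P = xi Q := hxi i (by omega) (i + 1) hi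
  have hcons := hconsec i hi
  -- prime counting is constant on [P, Q)
  have hπ : ∀ m, P ≤ m → m < Q → Nat.primeCounting m = Nat.primeCounting P := by
    intro m h1 h2
    show Nat.count Nat.Prime (m + 1) = Nat.count Nat.Prime (P + 1)
    exact count_const_aux P m h1 (fun k hk1 hk2 hp => hcons k hp ⟨hk1, by omega⟩)
  have hπQ : Nat.primeCounting Q = Nat.primeCounting P + 1 := by
    show Nat.count Nat.Prime (Q + 1) = Nat.count Nat.Prime (P + 1) + 1
    rw [Nat.count_succ]
    simp only [hQ, if_true]
    have : Q = (Q - 1) + 1 := by omega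
    rw [this]
    rw [count_const_aux P (Q - 1) (by omega)
      (fun k hk1 hk2 hp => hcons k hp ⟨hk1, by omega⟩)]
  have hiota : ∀ m, P < m → m < Q → iota m = iota P := by
    intro m h1 h2
    unfold iota
    rw [hπ m (by omega) h2]
  have hiotaQ : iota Q = -iota P := by
    unfold iota
    rw [hπQ, pow_succ]
    ring
  have hsplit : xi P + ∑ m ∈ Finset.Ioc P Q, iota m = xi Q := by
    unfold xi
    rw [show Finset.Icc 1 P = Finset.Ioc 0 P from rfl,
        show Finset.Icc 1 Q = Finset.Ioc 0 Q from rfl]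
    exact Finset.sum_Ioc_consecutive _ (Nat.zero_le _) (le_of_lt hPQ)
  have hsum0 : ∑ m ∈ Finset.Ioc P Q, iota m = 0 := by linarith
  have hsum : ∑ m ∈ Finset.Ioc P Q, iota m
      = -iota P + ((Q - P - 1 : ℕ) : ℤ) * iota P := by
    rw [← Finset.Ioo_insert_right hPQ, Finset.sum_insert Finset.right_notMem_Ioo]
    rw [hiotaQ]
    congr 1
    calc ∑ m ∈ Finset.Ioo P Q, iota m
        = ∑ _m ∈ Finset.Ioo P Q, iota P :=
          Finset.sum_congr rfl (fun m hm =>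
            hiota m (Finset.mem_Ioo.mp hm).1 (Finset.mem_Ioo.mp hm).2)
      _ = ((Q - P - 1 : ℕ) : ℤ) * iota P := by
          rw [Finset.sum_const, Nat.card_Ioo, nsmul_eq_mul]
  have hε : iota P = 1 ∨ iota P = -1 := by
    unfold iota
    rcases Nat.even_or_odd (Nat.primeCounting P) with h | h
    · left; exact h.neg_one_pow
    · right; exact h.neg_one_pow
  have key : ((Q - P - 1 : ℕ) : ℤ) = 1 := by
    rcases hε with h | h <;> rw [h] at hsum <;> rw [hsum] at hsum0 <;> linarith
  omega
end
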